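/- If G is a near-bipartite graph containing no induced subgraph isomorphic to P_1+P_2 (an edge plus an isolated vertex), then the minimum size of an independent feedback vertex set of G equals the minimum size of a feedback vertex set of G. -/

import Mathlib

open SimpleGraph

/-- `S` is an independent set of `G`. -/
def IsIS {V : Type*} (G : SimpleGraph V) (S : Set V) : Prop :=
  S.Pairwise fun u v => ¬ G.Adj u v

/-- `G` contains no induced subgraph isomorphic to `H`. -/
def HFree {W V : Type*} (H : SimpleGraph W) (G : SimpleGraph V) : Prop :=
  IsEmpty (H ↪g G)

/-- `G` is bipartite: the vertex set splits into two independent sets. -/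
def IsBip {V : Type*} (G : SimpleGraph V) : Prop :=
  ∃ X : Set V, IsIS G X ∧ IsIS G Xᶜ

/-- `S` is a vertex cover of `G`. -/
def IsVC {V : Type*} (G : SimpleGraph V) (S : Finset V) : Prop :=
  ∀ ⦃u v⦄, G.Adj u v → u ∈ S ∨ v ∈ S

/-- minimum size of a vertex cover. -/
noncomputable def vc {V : Type*} (G : SimpleGraph V) : ℕ :=
  sInf {n | ∃ S : Finset V, IsVC G S ∧ S.card = n}

/-- minimum size of an independent vertex cover. -/
noncomputable def ivc {V : Type*} (G : SimpleGraph V) : ℕ :=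
  sInf {n | ∃ S : Finset V, IsVC G S ∧ IsIS G ↑S ∧ S.card = n}

/-- `S` is a feedback vertex set of `G`: removing it leaves a forest. -/
def IsFVS {V : Type*} (G : SimpleGraph V) (S : Finset V) : Prop :=
  (G.induce ((S : Set V)ᶜ)).IsAcyclic

/-- minimum size of a feedback vertex set. -/
noncomputable def fvs {V : Type*} (G : SimpleGraph V) : ℕ :=
  sInf {n | ∃ S : Finset V, IsFVS G S ∧ S.card = n}

/-- minimum size of an independent feedback vertex set. -/
noncomputable def ifvs {V : Type*} (G : SimpleGraph V) : ℕ :=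
  sInf {n | ∃ S : Finset V, IsFVS G S ∧ IsIS G ↑S ∧ S.card = n}

/-- `G` is near-bipartite: it has an independent feedback vertex set. -/
def NearBip {V : Type*} (G : SimpleGraph V) : Prop :=
  ∃ S : Finset V, IsFVS G S ∧ IsIS G ↑S

/-- `P_1 + P_2`: one edge plus one isolated vertex. -/
def p1p2 : SimpleGraph (Fin 3) :=
  SimpleGraph.fromRel fun u v => u = 0 ∧ v = 1

/-!
A `P₁ + P₂`-free graph is complete multipartite. In such a graph an induced forest has all its
edges through one vertex, since otherwise two disjoint edges would span a triangle or a `C₄`; so it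
has at most `α(G) + 1` vertices, and every feedback vertex set has at least `n - α(G) - 1` of them.
Conversely, let `F` be a maximum independent set, i.e. a largest part. An independent feedback
vertex set `T` lies in one part and, by the above, all of `Tᶜ` but one vertex `x` lies in another;
hence all vertices outside `F` but one, `z`, lie in a single part, and the complement of
`F ∪ {z}` is an independent feedback vertex set with exactly `n - α(G) - 1` vertices.
-/

open Finset

lemma HFree.induce {U V : Type*} {H : SimpleGraph U} {G : SimpleGraph V} (h : HFree H G)
    (s : Set V) : HFree H (G.induce s) :=
  ⟨fun f => h.false ((Embedding.induce s).comp f)⟩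

namespace SimpleGraph

variable {V : Type*} {G : SimpleGraph V}

lemma adj_or_adj_of_p1p2Free (hfree : HFree p1p2 G) {u v w : V} (huv : G.Adj u v)
    (hwu : w ≠ u) (hwv : w ≠ v) : G.Adj w u ∨ G.Adj w v := by
  by_contra! ⟨hwu', hwv'⟩
  refine hfree.false ⟨⟨![u, v, w], ?_⟩, ?_⟩
  · intro i j hij
    fin_cases i <;> fin_cases j <;> simp_all [huv.ne]
  · intro i j
    change G.Adj (![u, v, w] i) (![u, v, w] j) ↔ p1p2.Adj i j
    fin_cases i <;> fin_cases j <;>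
      simp [p1p2, huv, huv.symm, hwu', hwv', mt G.adj_symm hwu', mt G.adj_symm hwv']

lemma le_starGraph_iff {w : V} : G ≤ starGraph w ↔ ∀ ⦃x y⦄, G.Adj x y → x = w ∨ y = w :=
  forall₂_congr fun _ _ =>
    ⟨fun h hxy => (starGraph_adj.mp (h hxy)).2, fun h hxy => starGraph_adj.mpr ⟨hxy.ne, h hxy⟩⟩

lemma IsAcyclic.not_adj_of_adj_of_adj (hG : G.IsAcyclic) {a b c : V} (hab : G.Adj a b)
    (hbc : G.Adj b c) : ¬ G.Adj a c := fun hac => by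
  classical
  exact hG.cliqueFree le_rfl {a, b, c} (is3Clique_triple_iff.mpr ⟨hab, hac, hbc⟩)

lemma IsAcyclic.eq_of_adj_of_adj (hG : G.IsAcyclic) {a b c d : V} (hac : a ≠ c)
    (hab : G.Adj a b) (hbc : G.Adj b c) (had : G.Adj a d) (hdc : G.Adj d c) : b = d := by
  have hp : (Walk.cons hab (Walk.cons hbc .nil)).IsPath := by
    simp [hab.ne, hbc.ne, hac]
  have hq : (Walk.cons had (Walk.cons hdc .nil)).IsPath := by
    simp [had.ne, hdc.ne, hac]
  have hpq := (hG.subsingleton_path a c).elim ⟨_, hp⟩ ⟨_, hq⟩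
  simp only [Subtype.mk.injEq, Walk.cons.injEq] at hpq
  exact hpq.1

lemma IsAcyclic.adj_share_vertex_of_p1p2Free (hG : G.IsAcyclic) (hfree : HFree p1p2 G)
    {p q r t : V} (hpq : G.Adj p q) (hrt : G.Adj r t) : p = r ∨ p = t ∨ q = r ∨ q = t := by
  by_contra! hne
  obtain ⟨hpr, hpt, hqr, hqt⟩ := hne
  wlog hpr' : G.Adj p r generalizing r t
  · exact this hrt.symm hpt hpr hqt hqr
      ((adj_or_adj_of_p1p2Free hfree hrt hpr hpt).resolve_left hpr')
  rcases adj_or_adj_of_p1p2Free hfree hrt hqr hqt with hqr' | hqt'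
  · exact hG.not_adj_of_adj_of_adj hpq hqr' hpr'
  · exact hqr (hG.eq_of_adj_of_adj hpt hpq hqt' hpr' hrt)

lemma IsAcyclic.exists_adj_ne_of_not_le_starGraph (hG : G.IsAcyclic) (hfree : HFree p1p2 G)
    {a b : V} (hab : G.Adj a b) (ha : ¬ G ≤ starGraph a) : ∃ c, G.Adj b c ∧ c ≠ a := by
  obtain ⟨x, y, hxy, hxa, hya⟩ : ∃ x y, G.Adj x y ∧ x ≠ a ∧ y ≠ a := by
    simpa [le_starGraph_iff] using ha
  rcases hG.adj_share_vertex_of_p1p2Free hfree hab hxy with h | h | rfl | rfl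
  · exact absurd h.symm hxa
  · exact absurd h.symm hya
  · exact ⟨y, hxy, hya⟩
  · exact ⟨x, hxy.symm, hxa⟩

lemma IsAcyclic.exists_le_starGraph_of_p1p2Free [Nonempty V] (hG : G.IsAcyclic)
    (hfree : HFree p1p2 G) : ∃ w, G ≤ starGraph w := by
  by_contra! hstar
  obtain ⟨a, b, hab, -⟩ : ∃ a b, G.Adj a b ∧ _ := by
    simpa [le_starGraph_iff] using hstar (Classical.arbitrary V)
  obtain ⟨c, hbc, hca⟩ := hG.exists_adj_ne_of_not_le_starGraph hfree hab (hstar a)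
  obtain ⟨u, hau, hub⟩ := hG.exists_adj_ne_of_not_le_starGraph hfree hab.symm (hstar b)
  have hcu : c ≠ u := by
    rintro rfl
    exact hG.not_adj_of_adj_of_adj hab hbc hau
  rcases hG.adj_share_vertex_of_p1p2Free hfree hau hbc with h | h | h | h
  exacts [hab.ne h, hca h.symm, hub h, hcu h.symm]

lemma exists_isIndepSet_diff_singleton_of_isAcyclic_induce [Nonempty V] (hfree : HFree p1p2 G)
    {s : Set V} (hs : (G.induce s).IsAcyclic) : ∃ w, G.IsIndepSet (s \ {w}) := by
  rcases s.eq_empty_or_nonempty with rfl | ⟨v, hv⟩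
  · exact ⟨Classical.arbitrary V, by simp⟩
  have : Nonempty s := ⟨⟨v, hv⟩⟩
  obtain ⟨w, hw⟩ := hs.exists_le_starGraph_of_p1p2Free (hfree.induce s)
  refine ⟨w, fun a ha b hb _ hab => ?_⟩
  rcases le_starGraph_iff.mp hw (show (G.induce s).Adj ⟨a, ha.1⟩ ⟨b, hb.1⟩ from hab) with h | h
  · exact ha.2 (congrArg Subtype.val h)
  · exact hb.2 (congrArg Subtype.val h)

lemma isAcyclic_induce_of_isIndepSet_diff_singleton {s : Set V} {w : V} (hw : w ∈ s)
    (hs : G.IsIndepSet (s \ {w})) : (G.induce s).IsAcyclic := by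
  refine (isAcyclic_starGraph (⟨w, hw⟩ : s)).anti (le_starGraph_iff.mpr fun a b hab => ?_)
  by_contra! h
  exact hs ⟨a.2, fun ha => h.1 (Subtype.ext ha)⟩ ⟨b.2, fun hb => h.2 (Subtype.ext hb)⟩
    (fun hab' => hab.ne (Subtype.ext hab')) hab

lemma IsMaximumIndepSet.adj_of_notMem [Fintype V] (hfree : HFree p1p2 G) {F : Finset V}
    (hF : G.IsMaximumIndepSet F) {u f : V} (hu : u ∉ F) (hf : f ∈ F) : G.Adj u f := by
  classical
  by_contra huf
  have hins : G.IsIndepSet ↑(insert u F) := by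
    rw [coe_insert]
    refine hF.isIndepSet.insert fun f' hf' _ => ?_
    suffices ¬ G.Adj u f' from ⟨this, mt G.adj_symm this⟩
    intro huf'
    have hff' : f ≠ f' := fun h => huf (h ▸ huf')
    rcases adj_or_adj_of_p1p2Free hfree huf' (fun h => hu (h ▸ hf)) hff' with h | h
    · exact huf h.symm
    · exact hF.isIndepSet hf hf' hff' h
  have := hF.maximum _ hins
  rw [card_insert_of_notMem hu] at this
  omega

lemma IsMaximumIndepSet.subset_of_mem [Fintype V] (hfree : HFree p1p2 G) {F : Finset V}
    (hF : G.IsMaximumIndepSet F) {J : Set V} (hJ : G.IsIndepSet J) {a : V} (haJ : a ∈ J)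
    (haF : a ∈ F) : J ⊆ F := fun b hb => by
  by_contra hbF
  exact hJ hb haJ (fun h => hbF (h ▸ haF)) (hF.adj_of_notMem hfree hbF haF)

lemma IsMaximumIndepSet.exists_isIndepSet_compl_diff_singleton [Fintype V] [Nonempty V]
    (hfree : HFree p1p2 G) {F T : Finset V} (hF : G.IsMaximumIndepSet F) (hT : IsFVS G T)
    (hTi : IsIS G T) : ∃ z, G.IsIndepSet ((↑F)ᶜ \ {z}) := by
  obtain ⟨x, hx⟩ := exists_isIndepSet_diff_singleton_of_isAcyclic_induce hfree hT
  by_cases hTF : ∃ t ∈ T, t ∈ F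
  · obtain ⟨t, htT, htF⟩ := hTF
    have hTsub := hF.subset_of_mem hfree hTi htT htF
    exact ⟨x, hx.mono (Set.sdiff_subset_sdiff_left (Set.compl_subset_compl.mpr hTsub))⟩
  by_cases hIF : ∃ i ∈ (↑T : Set V)ᶜ \ {x}, i ∈ F
  · obtain ⟨i, hiI, hiF⟩ := hIF
    have hIsub := hF.subset_of_mem hfree hx hiI hiF
    refine ⟨x, hTi.mono fun v ⟨hvF, hvx⟩ => ?_⟩
    by_contra hvT
    exact hvF (hIsub ⟨hvT, hvx⟩)
  -- Neither `T` nor `Tᶜ \ {x}` meets `F`, so `F = {x}` and `T` has at most one vertex.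
  push Not at hTF hIF
  have hFx : ∀ f ∈ F, f = x := fun f hf => by
    by_contra hfx
    exact hIF f ⟨fun hfT => hTF f hfT hf, hfx⟩ hf
  have hxF : x ∈ F := by
    obtain ⟨f, hf⟩ := card_pos.mp (hF.maximum {Classical.arbitrary V} (by simp))
    exact hFx f hf ▸ hf
  have hT1 : #T ≤ 1 := (hF.maximum T hTi).trans
    (card_le_one.mpr fun a ha b hb => (hFx a ha).trans (hFx b hb).symm)
  obtain ⟨z, hz⟩ := card_le_one_iff_subset_singleton.mp hT1
  refine ⟨z, hx.mono ?_⟩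
  rintro v ⟨hvF, hvz⟩
  exact ⟨fun hvT => hvz (by simpa using hz hvT), fun hvx => hvF (hvx ▸ hxF)⟩

lemma card_compl_le_indepNum_add_one [Fintype V] [DecidableEq V] (hfree : HFree p1p2 G)
    {S : Finset V} (hS : IsFVS G S) : #Sᶜ ≤ G.indepNum + 1 := by
  cases isEmpty_or_nonempty V
  · simp [eq_empty_of_isEmpty Sᶜ]
  obtain ⟨w, hw⟩ := exists_isIndepSet_diff_singleton_of_isAcyclic_induce hfree hS
  have hind : G.IsIndepSet ↑(Sᶜ.erase w) := by simpa [coe_erase] using hw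
  have := hind.card_le_indepNum
  have := pred_card_le_card_erase (s := Sᶜ) (a := w)
  omega

lemma exists_isFVS_isIS_card_compl_eq [Fintype V] [DecidableEq V] (hfree : HFree p1p2 G)
    (hnb : NearBip G) (hG : G ≠ ⊥) :
    ∃ S : Finset V, IsFVS G S ∧ IsIS G S ∧ #Sᶜ = G.indepNum + 1 := by
  obtain ⟨T, hT, hTi⟩ := hnb
  obtain ⟨F, hF⟩ := G.maximumIndepSet_exists
  obtain ⟨a, b, hab⟩ := ne_bot_iff_exists_adj.mp hG
  have : Nonempty V := ⟨a⟩
  obtain ⟨z, hzF, hz⟩ : ∃ z ∉ F, G.IsIndepSet ((↑F)ᶜ \ {z}) := by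
    obtain ⟨z, hz⟩ := hF.exists_isIndepSet_compl_diff_singleton hfree hT hTi
    by_cases hzF : z ∈ F
    · obtain ⟨y, hyF⟩ : ∃ y, y ∉ F := by
        by_contra! h
        exact hF.isIndepSet (h a) (h b) hab.ne hab
      refine ⟨y, hyF, hz.mono ?_⟩
      rintro v ⟨hvF, -⟩
      exact ⟨hvF, fun hvz => hvF (hvz ▸ hzF)⟩
    · exact ⟨z, hzF, hz⟩
  refine ⟨(insert z F)ᶜ, ?_, ?_, ?_⟩
  · rw [IsFVS, coe_compl, compl_compl]
    refine isAcyclic_induce_of_isIndepSet_diff_singleton (mem_insert_self z F) ?_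
    exact hF.isIndepSet.mono (by simp)
  · rwa [IsIS, compl_insert, coe_erase, coe_compl]
  · rw [compl_compl, card_insert_of_notMem hzF, maximumIndepSet_card_eq_indepNum F hF]

lemma exists_isFVS_isIS_card_le [Fintype V] (hfree : HFree p1p2 G) (hnb : NearBip G)
    {S : Finset V} (hS : IsFVS G S) : ∃ S' : Finset V, IsFVS G S' ∧ IsIS G S' ∧ #S' ≤ #S := by
  classical
  rcases eq_or_ne G ⊥ with rfl | hG
  · exact ⟨∅, by simp [IsFVS], by simp [IsIS], by simp⟩
  obtain ⟨S', hS', hS'i, hcard⟩ := exists_isFVS_isIS_card_compl_eq hfree hnb hG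
  refine ⟨S', hS', hS'i, ?_⟩
  have := card_compl_le_indepNum_add_one hfree hS
  have := card_compl_add_card S
  have := card_compl_add_card S'
  omega

end SimpleGraph

theorem stmt_11 {V : Type*} [Fintype V] (G : SimpleGraph V)
    (hnb : NearBip G) (hfree : HFree p1p2 G) : ifvs G = fvs G := by
  have ⟨T, hT, hTi⟩ := hnb
  have hfvs : {n | ∃ S : Finset V, IsFVS G S ∧ #S = n}.Nonempty := ⟨_, T, hT, rfl⟩
  have hifvs : {n | ∃ S : Finset V, IsFVS G S ∧ IsIS G ↑S ∧ #S = n}.Nonempty :=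
    ⟨_, T, hT, hTi, rfl⟩
  unfold ifvs fvs
  apply le_antisymm
  · obtain ⟨S, hS, hScard⟩ := Nat.sInf_mem hfvs
    obtain ⟨S', hS', hS'i, hle⟩ := exists_isFVS_isIS_card_le hfree hnb hS
    rw [← hScard]
    exact le_trans (Nat.sInf_le ⟨S', hS', hS'i, rfl⟩) hle
  · obtain ⟨S, hS, -, hScard⟩ := Nat.sInf_mem hifvs
    rw [← hScard]
    exact Nat.sInf_le ⟨S, hS, rfl⟩
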